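/- For positive semidefinite n×n complex matrices A and B and any real r ≥ 1, the trace norm satisfies ‖A^r + B^r‖₁ ≤ ‖(A+B)^r‖₁, i.e. tr(A^r) + tr(B^r) ≤ tr((A+B)^r). -/

import Mathlib

open Matrix
open scoped ComplexOrder

/-- `f` applied to a matrix via the spectral decomposition (junk value `0` if
the matrix is not Hermitian). -/
noncomputable def matFun {n : ℕ} (f : ℝ → ℝ) (A : Matrix (Fin n) (Fin n) ℂ) :
    Matrix (Fin n) (Fin n) ℂ :=
  if hA : A.IsHermitian then
    (hA.eigenvectorUnitary : Matrix (Fin n) (Fin n) ℂ) *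
      Matrix.diagonal (fun i => (f (hA.eigenvalues i) : ℂ)) *
      (star hA.eigenvectorUnitary : Matrix (Fin n) (Fin n) ℂ)
  else 0

/-- The eigenvalues of a Hermitian matrix, sorted in non-increasing order
(junk value `0` if the matrix is not Hermitian). -/
noncomputable def eigsDesc {n : ℕ} (A : Matrix (Fin n) (Fin n) ℂ) : Fin n → ℝ :=
  if hA : A.IsHermitian then (fun k => hA.eigenvalues (Tuple.sort hA.eigenvalues (Fin.rev k)))
  else 0

/-- The absolute value `|X| = (XᴴX)^{1/2}` of a matrix. -/
noncomputable def matAbs {n : ℕ} (X : Matrix (Fin n) (Fin n) ℂ) : Matrix (Fin n) (Fin n) ℂ :=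
  ((Matrix.posSemidef_conjTranspose_mul_self X).1.eigenvectorUnitary : Matrix (Fin n) (Fin n) ℂ) *
    Matrix.diagonal ((↑) ∘ (Real.sqrt ·) ∘ (Matrix.posSemidef_conjTranspose_mul_self X).1.eigenvalues) *
    (star (Matrix.posSemidef_conjTranspose_mul_self X).1.eigenvectorUnitary : Matrix (Fin n) (Fin n) ℂ)

/-- The singular values of `X`, sorted in non-increasing order. -/
noncomputable def svalsDesc {n : ℕ} (X : Matrix (Fin n) (Fin n) ℂ) : Fin n → ℝ :=
  eigsDesc (matAbs X)

/-- Sum of the first `k` entries of a vector indexed by `Fin n`. -/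
noncomputable def kSum {n : ℕ} (μ : Fin n → ℝ) (k : ℕ) : ℝ :=
  ∑ j ∈ Finset.univ.filter (fun j : Fin n => (j : ℕ) < k), μ j

/-- The operator norm: the largest singular value. -/
noncomputable def opNorm {n : ℕ} (X : Matrix (Fin n) (Fin n) ℂ) : ℝ :=
  ⨆ i, svalsDesc X i

/-!
Let `λᵢ, uᵢ` and `μⱼ, vⱼ` be eigenvalues and orthonormal eigenvectors of `A` and `C = A + B`.
Since `μⱼ = ⟪vⱼ, A vⱼ⟫ + ⟪vⱼ, B vⱼ⟫`, we have
`tr C^r = ∑ⱼ μⱼ^(r-1) ⟪vⱼ, A vⱼ⟫ + ∑ⱼ μⱼ^(r-1) ⟪vⱼ, B vⱼ⟫`, so it suffices to show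
`∑ᵢ λᵢ^r ≤ ∑ⱼ μⱼ^(r-1) ⟪vⱼ, A vⱼ⟫ = ∑ᵢ λᵢ ∑ⱼ |⟪uᵢ, vⱼ⟫|² μⱼ^(r-1)` whenever `0 ≤ A ≤ C`.
For `λᵢ > 0` the weights `|⟪uᵢ, vⱼ⟫|²` form a probability vector, and testing `A ≤ C` on
`C⁺uᵢ` shows that `λᵢ` is at most the weighted harmonic mean of the `μⱼ`. Since the harmonic
mean is at most the geometric mean, which is at most the power mean of order `s ≥ 0`,
`λᵢ^s ≤ ∑ⱼ |⟪uᵢ, vⱼ⟫|² μⱼ^s`; take `s = r - 1`.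
-/

open scoped InnerProductSpace MatrixOrder

namespace Real

lemma rpow_eq_mul_rpow_sub_one {x : ℝ} (hx : 0 ≤ x) {r : ℝ} (hr : r ≠ 0) :
    x ^ r = x * x ^ (r - 1) := by
  rw [← rpow_one_add' hx (by simpa using hr), add_sub_cancel]

variable {ι : Type*} [Fintype ι] {w z : ι → ℝ}

lemma inv_prod_rpow_le_sum_div (hw : ∀ i, 0 ≤ w i) (hw1 : ∑ i, w i = 1) (hz : ∀ i, 0 ≤ z i) :
    (∏ i, z i ^ w i)⁻¹ ≤ ∑ i, w i / z i := by
  have := geom_mean_le_arith_mean_weighted Finset.univ w (fun i => (z i)⁻¹) (fun i _ => hw i)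
    hw1 (fun i _ => inv_nonneg.mpr (hz i))
  simpa only [inv_rpow (hz _), Finset.prod_inv_distrib, div_eq_mul_inv] using this

lemma rpow_prod_rpow_le_sum_mul_rpow (hw : ∀ i, 0 ≤ w i) (hw1 : ∑ i, w i = 1)
    (hz : ∀ i, 0 ≤ z i) (s : ℝ) :
    (∏ i, z i ^ w i) ^ s ≤ ∑ i, w i * z i ^ s := by
  have := geom_mean_le_arith_mean_weighted Finset.univ w (fun i => z i ^ s) (fun i _ => hw i)
    hw1 (fun i _ => rpow_nonneg (hz i) s)
  rw [← finsetProd_rpow _ _ (fun i _ => rpow_nonneg (hz i) _)]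
  simpa only [← rpow_mul (hz _), mul_comm] using this

lemma rpow_le_sum_mul_rpow_of_sum_div_le_inv (hw : ∀ i, 0 ≤ w i) (hw1 : ∑ i, w i = 1)
    (hz : ∀ i, 0 ≤ z i) (hwz : ∀ i, z i = 0 → w i = 0) {x : ℝ} (hx : 0 < x)
    (hxz : ∑ i, w i / z i ≤ x⁻¹) {s : ℝ} (hs : 0 ≤ s) :
    x ^ s ≤ ∑ i, w i * z i ^ s := by
  have hG : 0 < ∏ i, z i ^ w i := Finset.prod_pos fun i _ => by
    rcases (hz i).eq_or_lt with h | h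
    · rw [← h, hwz i h.symm, rpow_zero]; exact one_pos
    · exact rpow_pos_of_pos h _
  have hxG : x ≤ ∏ i, z i ^ w i :=
    (inv_le_inv₀ hG hx).mp ((inv_prod_rpow_le_sum_div hw hw1 hz).trans hxz)
  exact (rpow_le_rpow hx.le hxG hs).trans (rpow_prod_rpow_le_sum_mul_rpow hw hw1 hz s)

end Real

variable {𝕜 ι : Type*} [RCLike 𝕜] [Fintype ι] [DecidableEq ι]

namespace Matrix.IsHermitian

variable {A : Matrix ι ι 𝕜} (hA : A.IsHermitian)

lemma toEuclideanLin_eigenvectorBasis (i : ι) :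
    toEuclideanLin A (hA.eigenvectorBasis i) =
      (hA.eigenvalues i : 𝕜) • hA.eigenvectorBasis i := by
  rw [← RCLike.real_smul_eq_coe_smul]
  exact congrArg (WithLp.toLp 2) (hA.mulVec_eigenvectorBasis i)

lemma eigenvalues_eq_re_inner_toEuclideanLin (i : ι) :
    hA.eigenvalues i =
      RCLike.re ⟪hA.eigenvectorBasis i, toEuclideanLin A (hA.eigenvectorBasis i)⟫_𝕜 := by
  rw [hA.toEuclideanLin_eigenvectorBasis, inner_smul_right, inner_self_eq_one_of_norm_eq_one
    (hA.eigenvectorBasis.orthonormal.1 i), mul_one, RCLike.ofReal_re]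

lemma re_inner_toEuclideanLin_eq_sum (y : EuclideanSpace 𝕜 ι) :
    RCLike.re ⟪y, toEuclideanLin A y⟫_𝕜 =
      ∑ i, hA.eigenvalues i * ‖⟪hA.eigenvectorBasis i, y⟫_𝕜‖ ^ 2 := by
  nth_rw 2 [← hA.eigenvectorBasis.sum_repr' y]
  simp only [map_sum, map_smul, hA.toEuclideanLin_eigenvectorBasis, inner_sum, inner_smul_right]
  refine Finset.sum_congr rfl fun i _ => ?_
  rw [← inner_conj_symm y, mul_left_comm, RCLike.mul_conj, ← RCLike.ofReal_pow,
    ← RCLike.ofReal_mul, RCLike.ofReal_re]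

end Matrix.IsHermitian

lemma Matrix.re_inner_toEuclideanLin_le_of_le {A C : Matrix ι ι 𝕜} (hAC : A ≤ C)
    (y : EuclideanSpace 𝕜 ι) :
    RCLike.re ⟪y, toEuclideanLin A y⟫_𝕜 ≤ RCLike.re ⟪y, toEuclideanLin C y⟫_𝕜 := by
  have := (isPositive_toEuclideanLin_iff.mpr (le_iff.mp hAC)).re_inner_nonneg_right y
  rwa [map_sub, LinearMap.sub_apply, inner_sub_right, map_sub, sub_nonneg] at this

namespace Matrix.PosSemidef

variable {A C : Matrix ι ι 𝕜} (hA : A.PosSemidef) (hC : C.IsHermitian)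

lemma eigenvalues_mul_norm_inner_sq_le_re_inner (i : ι) (y : EuclideanSpace 𝕜 ι) :
    hA.1.eigenvalues i * ‖⟪hA.1.eigenvectorBasis i, y⟫_𝕜‖ ^ 2 ≤
      RCLike.re ⟪y, toEuclideanLin A y⟫_𝕜 := by
  rw [hA.1.re_inner_toEuclideanLin_eq_sum]
  exact Finset.single_le_sum
    (f := fun m => hA.1.eigenvalues m * ‖⟪hA.1.eigenvectorBasis m, y⟫_𝕜‖ ^ 2)
    (fun m _ => mul_nonneg (hA.eigenvalues_nonneg m) (sq_nonneg _)) (Finset.mem_univ i)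

lemma eigenvalues_mul_norm_inner_sq_le (hAC : A ≤ C) (i j : ι) :
    hA.1.eigenvalues i * ‖⟪hA.1.eigenvectorBasis i, hC.eigenvectorBasis j⟫_𝕜‖ ^ 2 ≤
      hC.eigenvalues j :=
  hC.eigenvalues_eq_re_inner_toEuclideanLin j ▸
    (hA.eigenvalues_mul_norm_inner_sq_le_re_inner i _).trans
      (re_inner_toEuclideanLin_le_of_le hAC _)

/-- With `T` the left-hand side and `y = C⁺u`, we have `⟪u, y⟫ = ⟪y, C y⟫ = T`, so testing
`A ≤ C` on `y` gives `λ T² ≤ T`. Terms with `μⱼ = 0` vanish (`x / 0 = 0`), as they do in `C⁺`. -/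
lemma sum_norm_inner_sq_div_eigenvalues_le (hAC : A ≤ C) {i : ι}
    (hi : 0 < hA.1.eigenvalues i) :
    ∑ j, ‖⟪hA.1.eigenvectorBasis i, hC.eigenvectorBasis j⟫_𝕜‖ ^ 2 / hC.eigenvalues j ≤
      (hA.1.eigenvalues i)⁻¹ := by
  set u := hA.1.eigenvectorBasis i
  set v := hC.eigenvectorBasis
  set μ := hC.eigenvalues with hμ
  set T := ∑ j, ‖⟪u, v j⟫_𝕜‖ ^ 2 / μ j
  set y : EuclideanSpace 𝕜 ι := ∑ j, ((μ j)⁻¹ * ⟪v j, u⟫_𝕜 : 𝕜) • v j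
  have hvy : ∀ j, ⟪v j, y⟫_𝕜 = (μ j)⁻¹ * ⟪v j, u⟫_𝕜 := fun j =>
    v.orthonormal.inner_right_fintype _ j
  have huy : ⟪u, y⟫_𝕜 = T := by
    simp only [y, T, inner_sum, inner_smul_right, RCLike.ofReal_sum]
    refine Finset.sum_congr rfl fun j _ => ?_
    rw [← inner_conj_symm (v j) u, mul_assoc, RCLike.conj_mul]
    push_cast
    ring
  have hCy : RCLike.re ⟪y, toEuclideanLin C y⟫_𝕜 = T := by
    rw [hC.re_inner_toEuclideanLin_eq_sum, ← hμ]
    refine Finset.sum_congr rfl fun j _ => ?_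
    rw [hvy, norm_mul, RCLike.norm_ofReal, mul_pow, sq_abs, norm_inner_symm]
    rcases eq_or_ne (μ j) 0 with h | h
    · simp [h]
    · field_simp
  have hTT : hA.1.eigenvalues i * T ^ 2 ≤ T := by
    have := (hA.eigenvalues_mul_norm_inner_sq_le_re_inner i y).trans
      (re_inner_toEuclideanLin_le_of_le hAC y)
    rwa [huy, RCLike.norm_ofReal, sq_abs, hCy] at this
  rcases le_or_gt T 0 with hT | hT
  · exact hT.trans (inv_pos.mpr hi).le
  · rw [le_inv_comm₀ hT hi, inv_eq_one_div, le_div_iff₀ hT]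
    nlinarith

lemma eigenvalues_rpow_le_sum_norm_inner_sq_mul_rpow (hAC : A ≤ C) {i : ι}
    (hi : 0 < hA.1.eigenvalues i) {s : ℝ} (hs : 0 ≤ s) :
    hA.1.eigenvalues i ^ s ≤
      ∑ j, ‖⟪hA.1.eigenvectorBasis i, hC.eigenvectorBasis j⟫_𝕜‖ ^ 2 * hC.eigenvalues j ^ s := by
  refine Real.rpow_le_sum_mul_rpow_of_sum_div_le_inv (fun j => sq_nonneg _) ?_
    (fun j => (hA.nonneg.trans hAC).posSemidef.eigenvalues_nonneg j) (fun j hj => ?_) hi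
    (hA.sum_norm_inner_sq_div_eigenvalues_le hC hAC hi) hs
  · rw [hC.eigenvectorBasis.sum_sq_norm_inner_left, hA.1.eigenvectorBasis.orthonormal.1 i,
      one_pow]
  · have := hA.eigenvalues_mul_norm_inner_sq_le hC hAC i j
    rw [hj] at this
    exact le_antisymm (nonpos_of_mul_nonpos_right this hi) (sq_nonneg _)

lemma sum_eigenvalues_rpow_le (hAC : A ≤ C) {r : ℝ} (hr : 1 ≤ r) :
    ∑ i, hA.1.eigenvalues i ^ r ≤
      ∑ j, hC.eigenvalues j ^ (r - 1) *
        RCLike.re ⟪hC.eigenvectorBasis j, toEuclideanLin A (hC.eigenvectorBasis j)⟫_𝕜 := by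
  set lam := hA.1.eigenvalues
  set μ := hC.eigenvalues
  set c : ι → ι → ℝ := fun i j => ‖⟪hA.1.eigenvectorBasis i, hC.eigenvectorBasis j⟫_𝕜‖ ^ 2
  calc ∑ i, lam i ^ r ≤ ∑ i, lam i * ∑ j, c i j * μ j ^ (r - 1) := by
        refine Finset.sum_le_sum fun i _ => ?_
        rw [Real.rpow_eq_mul_rpow_sub_one (hA.eigenvalues_nonneg i) (one_pos.trans_le hr).ne']
        rcases (hA.eigenvalues_nonneg i).eq_or_lt with hi | hi
        · simp [lam, ← hi]
        · exact mul_le_mul_of_nonneg_left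
            (hA.eigenvalues_rpow_le_sum_norm_inner_sq_mul_rpow hC hAC hi (by linarith)) hi.le
    _ = ∑ j, μ j ^ (r - 1) * ∑ i, lam i * c i j := by
        simp only [Finset.mul_sum]
        rw [Finset.sum_comm]
        exact Finset.sum_congr rfl fun j _ => Finset.sum_congr rfl fun i _ => by ring
    _ = _ := by simp only [c, lam, hA.1.re_inner_toEuclideanLin_eq_sum]

end Matrix.PosSemidef

lemma re_trace_matFun {n : ℕ} (f : ℝ → ℝ) {A : Matrix (Fin n) (Fin n) ℂ} (hA : A.IsHermitian) :
    (matFun f A).trace.re = ∑ i, f (hA.eigenvalues i) := by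
  rw [matFun, dif_pos hA, trace_mul_cycle, Unitary.coe_star_mul_self, one_mul, trace_diagonal,
    Complex.re_sum]
  simp

/-- McCarthy: for PSD matrices and `r ≥ 1`, `tr(A^r) + tr(B^r) ≤ tr((A+B)^r)`. -/
theorem trace_rpow_add_le {n : ℕ} (A B : Matrix (Fin n) (Fin n) ℂ)
    (hA : A.PosSemidef) (hB : B.PosSemidef) (r : ℝ) (hr : 1 ≤ r) :
    ((matFun (fun x => x ^ r) A).trace).re + ((matFun (fun x => x ^ r) B).trace).re ≤
      ((matFun (fun x => x ^ r) (A + B)).trace).re := by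
  have hC := hA.add hB
  have hAC : A ≤ A + B := le_add_of_nonneg_right hB.nonneg
  have hBC : B ≤ A + B := le_add_of_nonneg_left hA.nonneg
  rw [re_trace_matFun _ hA.1, re_trace_matFun _ hB.1, re_trace_matFun _ hC.1]
  set μ := hC.1.eigenvalues
  set v := hC.1.eigenvectorBasis
  calc _ ≤ ∑ j, μ j ^ (r - 1) * RCLike.re ⟪v j, toEuclideanLin A (v j)⟫_ℂ +
        ∑ j, μ j ^ (r - 1) * RCLike.re ⟪v j, toEuclideanLin B (v j)⟫_ℂ :=
      add_le_add (hA.sum_eigenvalues_rpow_le hC.1 hAC hr) (hB.sum_eigenvalues_rpow_le hC.1 hBC hr)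
    _ = ∑ j, μ j ^ r := by
      rw [← Finset.sum_add_distrib]
      refine Finset.sum_congr rfl fun j _ => ?_
      rw [← mul_add, ← map_add, ← inner_add_right, ← LinearMap.add_apply, ← map_add,
        ← hC.1.eigenvalues_eq_re_inner_toEuclideanLin, mul_comm,
        ← Real.rpow_eq_mul_rpow_sub_one (hC.eigenvalues_nonneg j) (one_pos.trans_le hr).ne']
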